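/- arXiv:0912.2464 — 18 statements merged into one kernel-verified Lean document; each statement's English description precedes it below -/
import Mathlib

section
/- Suppose x, u, y, v, α, β are complex numbers with α ≠ 0, β ≠ 0 and α ≠ β, satisfying the quad-equation Q1 with δ=0, i.e. α(xu+yv) − β(xv+yu) − (α−β)(xy+uv) = 0. Then the biquadratic identities β²(x−u)²(y−v)² = α²(x−v)²(y−u)² and (α−β)²(x−u)²(y−v)² = α²(x−y)²(u−v)² hold. (These express h(x,u;α)h(y,v;α) = h(x,v;β)h(y,u;β) = g(x,y;α−β)g(u,v;α−β) for the edge biquadratic h(x,u;α) = (x−u)²/(2α) and diagonal biquadratic g(x,y;γ) = (x−y)²/(2γ).) -/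
/-- Biquadratic identities for (Q1)_{δ=0}. -/
theorem stmt_0 (x u y v α β : ℂ) (hα : α ≠ 0) (hβ : β ≠ 0) (hαβ : α ≠ β)
    (hQ : α * (x*u + y*v) - β * (x*v + y*u) - (α - β) * (x*y + u*v) = 0) :
    β^2 * (x - u)^2 * (y - v)^2 = α^2 * (x - v)^2 * (y - u)^2 ∧
    (α - β)^2 * (x - u)^2 * (y - v)^2 = α^2 * (x - y)^2 * (u - v)^2 := by
  have hs : β * ((x - u) * (y - v)) = α * ((x - v) * (y - u)) := by
    linear_combination hQ
  constructor
  · linear_combination (β * ((x - u) * (y - v)) + α * ((x - v) * (y - u))) * hs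
  · linear_combination (-((α - β) * ((x - u) * (y - v)) + α * ((x - y) * (u - v)))) * hs
end

section
/- Suppose x, u, y, v, α, β are complex numbers satisfying the quad-equation H2, i.e. (x−y)(u−v) + (β−α)(x+u+y+v) + β² − α² = 0. Then (x+u+α)(y+v+α) = (x+v+β)(y+u+β); if moreover α ≠ β, then also 4(α−β)²(x+u+α)(y+v+α) = ((x−y)² − (α−β)²)((u−v)² − (α−β)²). (These express h(x,u;α)h(y,v;α) = h(x,v;β)h(y,u;β) = g(x,y;α−β)g(u,v;α−β) for the biquadratics h(x,u;α) = x+u+α and g(x,y;γ) = ((x−y)²−γ²)/(2γ).) -/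
/-- Biquadratic identities for (H2). -/
theorem stmt_1 (x u y v α β : ℂ)
    (hQ : (x - y) * (u - v) + (β - α) * (x + u + y + v) + β^2 - α^2 = 0) :
    (x + u + α) * (y + v + α) = (x + v + β) * (y + u + β) ∧
    (α ≠ β →
      4 * (α - β)^2 * (x + u + α) * (y + v + α) =
        ((x - y)^2 - (α - β)^2) * ((u - v)^2 - (α - β)^2)) := by
  constructor
  · linear_combination -hQ
  · intro _
    linear_combination (-((x - y) * (u - v) + (β - α) * (x + u + y + v) + β^2 - α^2)
      - 2 * (α - β) * (x + u + y + v + α + β) - 2 * (α - β)^2) * hQ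
end

section
/- Suppose x, u, y, v are complex numbers, α, β, δ are real numbers with α ≠ β, and the quad-equation H3 holds: e^α(xu+yv) − e^β(xv+yu) + δ(e^{2α} − e^{2β}) = 0. Then (xu + δe^α)(yv + δe^α) = (xv + δe^β)(yu + δe^β), and (e^{2α} − e^{2β})²(xu + δe^α)(yv + δe^α) = (e^α x − e^β y)(e^β x − e^α y)(e^α u − e^β v)(e^β u − e^α v). (These express h(x,u;α)h(y,v;α) = h(x,v;β)h(y,u;β) = g(x,y;α−β)g(u,v;α−β) for the biquadratics h(x,u;α) = xu + δe^α and g(x,y;α−β) = (e^α x − e^β y)(e^β x − e^α y)/(e^{2α} − e^{2β}).) -/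
/-!
Write `a = e^α`, `b = e^β` and `Q` for the left-hand side of (H3). Both identities hold modulo `Q`
as polynomial identities: the first difference is `δ Q`, and
`(a² - b²)(xu + δa) = a Q - (bx - ay)(bu - av)`, `(a² - b²)(yv + δa) = a Q - (ax - by)(au - bv)`.
-/

namespace H3

variable {R : Type*} [CommRing R]

/-- The (H3) quad-polynomial with `a = e^α`, `b = e^β`. -/
def quad (a b δ x u y v : R) : R :=
  a * (x * u + y * v) - b * (x * v + y * u) + δ * (a ^ 2 - b ^ 2)

theorem quad_swap (a b δ x u y v : R) : quad a b δ y v x u = quad a b δ x u y v := by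
  unfold quad; ring

theorem sq_sub_sq_mul_biquadratic (a b δ x u y v : R) :
    (a ^ 2 - b ^ 2) * (x * u + δ * a) = a * quad a b δ x u y v - (b * x - a * y) * (b * u - a * v) := by
  unfold quad; ring

theorem biquadratic_mul_eq (a b δ x u y v : R) (hQ : quad a b δ x u y v = 0) :
    (x * u + δ * a) * (y * v + δ * a) = (x * v + δ * b) * (y * u + δ * b) := by
  unfold quad at hQ
  linear_combination δ * hQ

theorem sq_sub_sq_sq_mul_biquadratic_mul_eq (a b δ x u y v : R) (hQ : quad a b δ x u y v = 0) :
    (a ^ 2 - b ^ 2) ^ 2 * (x * u + δ * a) * (y * v + δ * a) =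
      (a * x - b * y) * (b * x - a * y) * (a * u - b * v) * (b * u - a * v) := by
  have hxu := sq_sub_sq_mul_biquadratic a b δ x u y v
  have hyv := sq_sub_sq_mul_biquadratic a b δ y v x u
  rw [quad_swap, hQ] at hyv
  rw [hQ] at hxu
  linear_combination (y * v + δ * a) * (a ^ 2 - b ^ 2) * hxu - (b * x - a * y) * (b * u - a * v) * hyv

end H3

theorem stmt_2_general (x u y v : ℂ) (α β δ : ℝ)
    (hQ : (Real.exp α : ℂ) * (x*u + y*v) - (Real.exp β : ℂ) * (x*v + y*u)
        + (δ : ℂ) * ((Real.exp (2*α) : ℂ) - (Real.exp (2*β) : ℂ)) = 0) :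
    (x*u + (δ : ℂ) * (Real.exp α : ℂ)) * (y*v + (δ : ℂ) * (Real.exp α : ℂ)) =
      (x*v + (δ : ℂ) * (Real.exp β : ℂ)) * (y*u + (δ : ℂ) * (Real.exp β : ℂ)) ∧
    ((Real.exp (2*α) : ℂ) - (Real.exp (2*β) : ℂ))^2
        * (x*u + (δ : ℂ) * (Real.exp α : ℂ)) * (y*v + (δ : ℂ) * (Real.exp α : ℂ)) =
      ((Real.exp α : ℂ) * x - (Real.exp β : ℂ) * y)
        * ((Real.exp β : ℂ) * x - (Real.exp α : ℂ) * y)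
        * ((Real.exp α : ℂ) * u - (Real.exp β : ℂ) * v)
        * ((Real.exp β : ℂ) * u - (Real.exp α : ℂ) * v) := by
  have exp_two_mul : ∀ t : ℝ, (Real.exp (2 * t) : ℂ) = (Real.exp t : ℂ) ^ 2 := fun t => by
    rw [two_mul, Real.exp_add]; push_cast; ring
  rw [exp_two_mul α, exp_two_mul β] at hQ ⊢
  exact ⟨H3.biquadratic_mul_eq _ _ _ x u y v hQ,
    H3.sq_sub_sq_sq_mul_biquadratic_mul_eq _ _ _ x u y v hQ⟩

/-- Biquadratic identities for (H3). -/
theorem stmt_2 (x u y v : ℂ) (α β δ : ℝ) (hαβ : α ≠ β)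
    (hQ : (Real.exp α : ℂ) * (x*u + y*v) - (Real.exp β : ℂ) * (x*v + y*u)
        + (δ : ℂ) * ((Real.exp (2*α) : ℂ) - (Real.exp (2*β) : ℂ)) = 0) :
    (x*u + (δ : ℂ) * (Real.exp α : ℂ)) * (y*v + (δ : ℂ) * (Real.exp α : ℂ)) =
      (x*v + (δ : ℂ) * (Real.exp β : ℂ)) * (y*u + (δ : ℂ) * (Real.exp β : ℂ)) ∧
    ((Real.exp (2*α) : ℂ) - (Real.exp (2*β) : ℂ))^2
        * (x*u + (δ : ℂ) * (Real.exp α : ℂ)) * (y*v + (δ : ℂ) * (Real.exp α : ℂ)) =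
      ((Real.exp α : ℂ) * x - (Real.exp β : ℂ) * y)
        * ((Real.exp β : ℂ) * x - (Real.exp α : ℂ) * y)
        * ((Real.exp α : ℂ) * u - (Real.exp β : ℂ) * v)
        * ((Real.exp β : ℂ) * u - (Real.exp α : ℂ) * v) :=
  stmt_2_general x u y v α β δ hQ
end

section
/- Suppose x, u, y, v are complex numbers and α, β are real numbers with sin α ≠ 0, sin β ≠ 0, sin(α−β) ≠ 0, satisfying the quad-equation A2: sin(α)(xv+yu) − sin(β)(xu+yv) − sin(α−β)(1 + xuyv) = 0. Then sin²β (x²u² + 1 − 2cos(α)xu)(y²v² + 1 − 2cos(α)yv) = sin²α (x²v² + 1 − 2cos(β)xv)(y²u² + 1 − 2cos(β)yu), and sin²(α−β)(x²u² + 1 − 2cos(α)xu)(y²v² + 1 − 2cos(α)yv) = sin²α (x² + y² − 2cos(α−β)xy)(u² + v² − 2cos(α−β)uv). -/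
/-- Biquadratic identities for (A2). -/
theorem stmt_3 (x u y v : ℂ) (α β : ℝ)
    (hsα : Real.sin α ≠ 0) (hsβ : Real.sin β ≠ 0) (hsαβ : Real.sin (α - β) ≠ 0)
    (hQ : (Real.sin α : ℂ) * (x*v + y*u) - (Real.sin β : ℂ) * (x*u + y*v)
        - (Real.sin (α - β) : ℂ) * (1 + x*u*y*v) = 0) :
    (Real.sin β : ℂ)^2 * (x^2*u^2 + 1 - 2*(Real.cos α : ℂ)*x*u)
        * (y^2*v^2 + 1 - 2*(Real.cos α : ℂ)*y*v) =
      (Real.sin α : ℂ)^2 * (x^2*v^2 + 1 - 2*(Real.cos β : ℂ)*x*v)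
        * (y^2*u^2 + 1 - 2*(Real.cos β : ℂ)*y*u) ∧
    (Real.sin (α - β) : ℂ)^2 * (x^2*u^2 + 1 - 2*(Real.cos α : ℂ)*x*u)
        * (y^2*v^2 + 1 - 2*(Real.cos α : ℂ)*y*v) =
      (Real.sin α : ℂ)^2 * (x^2 + y^2 - 2*(Real.cos (α - β) : ℂ)*x*y)
        * (u^2 + v^2 - 2*(Real.cos (α - β) : ℂ)*u*v) := by
  rw [Real.sin_sub] at hQ ⊢
  rw [Real.cos_sub]
  simp only [Complex.ofReal_sub, Complex.ofReal_add, Complex.ofReal_mul] at hQ ⊢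
  have h1 : (Real.sin α : ℂ)^2 + (Real.cos α : ℂ)^2 = 1 := by
    exact_mod_cast congrArg (Complex.ofReal) (Real.sin_sq_add_cos_sq α)
  have h2 : (Real.sin β : ℂ)^2 + (Real.cos β : ℂ)^2 = 1 := by
    exact_mod_cast congrArg (Complex.ofReal) (Real.sin_sq_add_cos_sq β)
  constructor
  · linear_combination hQ * ((Real.cos α : ℂ)*(Real.sin β : ℂ) + (Real.sin α : ℂ)*(Real.cos β : ℂ) - y*v*(Real.sin β : ℂ) - u*y*(Real.sin α : ℂ) - x*v*(Real.sin α : ℂ) - x*u*(Real.sin β : ℂ) + x*u*y*v*(Real.cos α : ℂ)*(Real.sin β : ℂ) + x*u*y*v*(Real.sin α : ℂ)*(Real.cos β : ℂ)) + h1 * (-(1:ℂ) + (Real.cos β : ℂ)^2 + (2:ℂ)*x*u*y*v - (2:ℂ)*x*u*y*v*(Real.cos β : ℂ)^2 - x^2*u^2*y^2*v^2 + x^2*u^2*y^2*v^2*(Real.cos β : ℂ)^2) + h2 * ((1:ℂ) - (Real.cos α : ℂ)^2 - (2:ℂ)*x*u*y*v + (2:ℂ)*x*u*y*v*(Real.cos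 α : ℂ)^2 + x^2*u^2*y^2*v^2 - x^2*u^2*y^2*v^2*(Real.cos α : ℂ)^2)
  · linear_combination hQ * ((Real.cos α : ℂ)*(Real.sin β : ℂ) - (Real.sin α : ℂ)*(Real.cos β : ℂ) - y*v*(Real.cos α : ℂ)^2*(Real.sin β : ℂ) + (2:ℂ)*y*v*(Real.sin α : ℂ)*(Real.cos α : ℂ)*(Real.cos β : ℂ) + y*v*(Real.sin α : ℂ)^2*(Real.sin β : ℂ) - u*y*(Real.sin α : ℂ) - x*v*(Real.sin α : ℂ) - x*u*(Real.cos α : ℂ)^2*(Real.sin β : ℂ) + (2:ℂ)*x*u*(Real.sin α : ℂ)*(Real.cos α : ℂ)*(Real.cos β : ℂ) + x*u*(Real.sin α : ℂ)^2*(Real.sin β : ℂ) + x*u*y*v*(Real.cos α : ℂ)*(Real.sin β : ℂ) - x*u*y*v*(Real.sin α : ℂ)*(Real.cos β : ℂ)) + h1 * (-y*v*(Real.cos α : ℂ)*(Real.sin β : ℂ)^2 + y*v*(Real.sin α : ℂ)*(Real.sin β : ℂ)*(Real.cos β : ℂ) - y^2*v^2 + y^2*v^2*(Real.cos β : ℂ)^2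 + y^2*v^2*(Real.sin β : ℂ)^2 + u*y^2*v*(Real.sin α : ℂ)*(Real.sin β : ℂ) + x*y*v^2*(Real.sin α : ℂ)*(Real.sin β : ℂ) - x*u*(Real.cos α : ℂ)*(Real.sin β : ℂ)^2 + x*u*(Real.sin α : ℂ)*(Real.sin β : ℂ)*(Real.cos β : ℂ) + (2:ℂ)*x*u*y*v - (2:ℂ)*x*u*y*v*(Real.cos β : ℂ)^2 - (2:ℂ)*x*u*y*v*(Real.sin β : ℂ)^2 + (4:ℂ)*x*u*y*v*(Real.cos α : ℂ)^2*(Real.sin β : ℂ)^2 - (8:ℂ)*x*u*y*v*(Real.sin α : ℂ)*(Real.cos α : ℂ)*(Real.sin β : ℂ)*(Real.cos β : ℂ) - (4:ℂ)*x*u*y*v*(Real.sin α : ℂ)^2*(Real.sin β : ℂ)^2 - x*u*y^2*v^2*(Real.cos α : ℂ)*(Real.sin β : ℂ)^2 + x*u*y^2*v^2*(Real.sin α : ℂ)*(Real.sin β : ℂ)*(Real.cos β : ℂ) + x*u^2*y*(Real.sin α : ℂ)*(Real.sin β : ℂ) + x^2*u*v*(Real.sin α : ℂ)*(Real.sin β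 : ℂ) - x^2*u^2 + x^2*u^2*(Real.cos β : ℂ)^2 + x^2*u^2*(Real.sin β : ℂ)^2 - x^2*u^2*y*v*(Real.cos α : ℂ)*(Real.sin β : ℂ)^2 + x^2*u^2*y*v*(Real.sin α : ℂ)*(Real.sin β : ℂ)*(Real.cos β : ℂ)) + h2 * (y^2*v^2 - y^2*v^2*(Real.cos α : ℂ)^2 - (2:ℂ)*x*u*y*v + (2:ℂ)*x*u*y*v*(Real.cos α : ℂ)^2 + x^2*u^2 - x^2*u^2*(Real.cos α : ℂ)^2)
end

section
/- For all complex numbers x, u, y, v, α, β the polynomial identity α(x−v)(x−y) − β(x−u)(x−y) − (α−β)(x−u)(x−v) = α(xu+yv) − β(xv+yu) − (α−β)(xy+uv) holds. Consequently, if x ≠ u, x ≠ v and x ≠ y, the quad-equation Q1 with δ=0 is satisfied, i.e. α(xu+yv) − β(xv+yu) − (α−β)(xy+uv) = 0, if and only if the three-leg form centered at x holds: α/(x−u) − β/(x−v) = (α−β)/(x−y). -/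
/-- Three-leg form of (Q1)_{δ=0}. -/
theorem stmt_5 (x u y v α β : ℂ) :
    (α * (x - v) * (x - y) - β * (x - u) * (x - y) - (α - β) * (x - u) * (x - v) =
      α * (x*u + y*v) - β * (x*v + y*u) - (α - β) * (x*y + u*v)) ∧
    (x ≠ u → x ≠ v → x ≠ y →
      (α * (x*u + y*v) - β * (x*v + y*u) - (α - β) * (x*y + u*v) = 0 ↔
        α / (x - u) - β / (x - v) = (α - β) / (x - y))) := by
  constructor
  · ring
  · intro hu hv hy
    have hu' : x - u ≠ 0 := sub_ne_zero.mpr hu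
    have hv' : x - v ≠ 0 := sub_ne_zero.mpr hv
    have hy' : x - y ≠ 0 := sub_ne_zero.mpr hy
    rw [div_sub_div _ _ hu' hv', div_eq_div_iff (mul_ne_zero hu' hv') hy']
    constructor
    · intro h
      have : α * (x - v) * (x - y) - β * (x - u) * (x - y) - (α - β) * (x - u) * (x - v) = 0 := by
        rw [show α * (x - v) * (x - y) - β * (x - u) * (x - y) - (α - β) * (x - u) * (x - v) =
          α * (x*u + y*v) - β * (x*v + y*u) - (α - β) * (x*y + u*v) by ring, h]
      linear_combination this
    · intro h
      linear_combination h
end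

section
/- For all complex numbers x, u, y, v, α, β the polynomial identity (x−u+α)(x−v−β)(x−y−α+β) − (x−u−α)(x−v+β)(x−y+α−β) = 2[α(xu+yv) − β(xv+yu) − (α−β)(xy+uv) + αβ(α−β)] holds. Consequently the quad-equation Q1 with δ=1 is satisfied, i.e. α(xu+yv) − β(xv+yu) − (α−β)(xy+uv) + αβ(α−β) = 0, if and only if the (exponentiated) three-leg form centered at x holds: (x−u+α)(x−v−β)(x−y−α+β) = (x−u−α)(x−v+β)(x−y+α−β). -/
/-- Three-leg form of (Q1)_{δ=1}. -/
theorem stmt_6 (x u y v α β : ℂ) :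
    ((x - u + α) * (x - v - β) * (x - y - α + β)
        - (x - u - α) * (x - v + β) * (x - y + α - β) =
      2 * (α * (x*u + y*v) - β * (x*v + y*u) - (α - β) * (x*y + u*v) + α*β*(α - β))) ∧
    (α * (x*u + y*v) - β * (x*v + y*u) - (α - β) * (x*y + u*v) + α*β*(α - β) = 0 ↔
      (x - u + α) * (x - v - β) * (x - y - α + β) =
        (x - u - α) * (x - v + β) * (x - y + α - β)) := by
  have h : (x - u + α) * (x - v - β) * (x - y - α + β)
        - (x - u - α) * (x - v + β) * (x - y + α - β) =
      2 * (α * (x*u + y*v) - β * (x*v + y*u) - (α - β) * (x*y + u*v) + α*β*(α - β)) := by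
    ring
  refine ⟨h, ?_⟩
  constructor
  · intro h0
    linear_combination h + 2*h0
  · intro he
    have h2 : (2:ℂ) * (α * (x*u + y*v) - β * (x*v + y*u) - (α - β) * (x*y + u*v) + α*β*(α - β)) = 0 := by
      rw [← h, he]; ring
    have := mul_eq_zero.mp h2
    rcases this with h3 | h3
    · exact absurd h3 two_ne_zero
    · exact h3
end

section
/- 3D consistency and tetrahedron property of H1: Let x, x₁, x₂, x₃ be complex numbers with x₁, x₂, x₃ pairwise distinct, and let α₁, α₂, α₃ be complex parameters. Define x₁₂ = x − (α₁−α₂)/(x₁−x₂), x₁₃ = x − (α₁−α₃)/(x₁−x₃), x₂₃ = x − (α₂−α₃)/(x₂−x₃) (so that the H1 equation holds on the three faces of the cube adjacent to x), and assume x₁₂, x₁₃, x₂₃ are pairwise distinct. Then the three values x₁ − (α₂−α₃)/(x₁₂−x₁₃), x₂ − (α₃−α₁)/(x₂₃−x₁₂), and x₃ − (α₁−α₂)/(x₁₃−x₂₃) coincide (3D consistency); moreover, this common value x₁₂₃ does not depend on x: if x′ is any other complex number for which the corresponding x′₁₂, x′₁₃, x′₂₃ are defined and pairwise distinct, then the common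 value computed from x′ equals the one computed from x (tetrahedron property). -/
/-- 3D consistency and tetrahedron property of (H1). -/
theorem stmt_8 (x x1 x2 x3 α1 α2 α3 : ℂ)
    (h12 : x1 ≠ x2) (h13 : x1 ≠ x3) (h23 : x2 ≠ x3)
    (x12 x13 x23 : ℂ)
    (e12 : x12 = x - (α1 - α2) / (x1 - x2))
    (e13 : x13 = x - (α1 - α3) / (x1 - x3))
    (e23 : x23 = x - (α2 - α3) / (x2 - x3))
    (d1 : x12 ≠ x13) (d2 : x23 ≠ x12) (d3 : x13 ≠ x23) :
    (x1 - (α2 - α3) / (x12 - x13) = x2 - (α3 - α1) / (x23 - x12) ∧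
     x1 - (α2 - α3) / (x12 - x13) = x3 - (α1 - α2) / (x13 - x23)) ∧
    (∀ x' x12' x13' x23' : ℂ,
      x12' = x' - (α1 - α2) / (x1 - x2) →
      x13' = x' - (α1 - α3) / (x1 - x3) →
      x23' = x' - (α2 - α3) / (x2 - x3) →
      x12' ≠ x13' → x23' ≠ x12' → x13' ≠ x23' →
      x1 - (α2 - α3) / (x12' - x13') = x1 - (α2 - α3) / (x12 - x13)) := by
  have h12' : x1 - x2 ≠ 0 := sub_ne_zero.mpr h12
  have h13' : x1 - x3 ≠ 0 := sub_ne_zero.mpr h13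
  have h23' : x2 - x3 ≠ 0 := sub_ne_zero.mpr h23
  obtain ⟨D, hDdef⟩ : ∃ D : ℂ, D = x1*α2 - x1*α3 - x2*α1 + x2*α3 + x3*α1 - x3*α2 := ⟨_, rfl⟩
  have k1 : x12 - x13 = D / ((x1 - x2) * (x1 - x3)) := by
    rw [e12, e13, hDdef]; field_simp; ring
  have k2 : x23 - x12 = -D / ((x1 - x2) * (x2 - x3)) := by
    rw [e12, e23, hDdef]; field_simp; ring
  have k3 : x13 - x23 = D / ((x1 - x3) * (x2 - x3)) := by
    rw [e13, e23, hDdef]; field_simp; ring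
  have hD : D ≠ 0 := by
    intro h
    exact d1 (sub_eq_zero.mp (by rw [k1, h, zero_div]))
  refine ⟨⟨?_, ?_⟩, ?_⟩
  · rw [k1, k2]; field_simp [hD]; rw [hDdef]; ring
  · rw [k1, k3]; field_simp [hD]; rw [hDdef]; ring
  · intro x' x12' x13' x23' f12 f13 f23 g1 g2 g3
    have key : x12' - x13' = x12 - x13 := by
      subst e12 e13 f12 f13; ring
    rw [key]
end

section
/- Tetrahedron equation for Q1 with δ=0: Let x₁, x₂, x₃, x₁₂, x₁₃, x₂₃, x₁₂₃ be complex numbers and α₁, α₂, α₃ complex parameters such that the quad-equation Q1 with δ=0 holds on the three faces of an elementary cube adjacent to x₁₂₃, namely Q(x₁, x₁₂, x₁₂₃, x₁₃; α₂, α₃) = 0, Q(x₂, x₁₂, x₁₂₃, x₂₃; α₁, α₃) = 0, and Q(x₃, x₁₃, x₁₂₃, x₂₃; α₁, α₂) = 0, where Q(x,u,y,v;α,β) = α(xu+yv) − β(xv+yu) − (α−β)(xy+uv). Assume x₁₂₃ is distinct from each of x₁, x₂, x₃, x₁₂, x₁₃, x₂₃. Then the fields at the vertices of the white tetrahedron satisfy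 (α₂−α₃)/(x₁₂₃−x₁) + (α₃−α₁)/(x₁₂₃−x₂) + (α₁−α₂)/(x₁₂₃−x₃) = 0. -/
lemma threeleg (x u y v a b : ℂ)
    (hQ : a * (x*u + y*v) - b * (x*v + y*u) - (a - b) * (x*y + u*v) = 0)
    (h1 : y ≠ x) (h2 : y ≠ u) (h3 : y ≠ v) :
    (a - b) / (y - x) = a / (y - v) - b / (y - u) := by
  have d1 : y - x ≠ 0 := sub_ne_zero.mpr h1
  have d2 : y - u ≠ 0 := sub_ne_zero.mpr h2
  have d3 : y - v ≠ 0 := sub_ne_zero.mpr h3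
  field_simp
  linear_combination -hQ

/-- Tetrahedron equation for (Q1)_{δ=0}. -/
theorem stmt_9 (x1 x2 x3 x12 x13 x23 x123 α1 α2 α3 : ℂ)
    (hQ1 : α2 * (x1*x12 + x123*x13) - α3 * (x1*x13 + x123*x12)
        - (α2 - α3) * (x1*x123 + x12*x13) = 0)
    (hQ2 : α1 * (x2*x12 + x123*x23) - α3 * (x2*x23 + x123*x12)
        - (α1 - α3) * (x2*x123 + x12*x23) = 0)
    (hQ3 : α1 * (x3*x13 + x123*x23) - α2 * (x3*x23 + x123*x13)
        - (α1 - α2) * (x3*x123 + x13*x23) = 0)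
    (h1 : x123 ≠ x1) (h2 : x123 ≠ x2) (h3 : x123 ≠ x3)
    (h12 : x123 ≠ x12) (h13 : x123 ≠ x13) (h23 : x123 ≠ x23) :
    (α2 - α3) / (x123 - x1) + (α3 - α1) / (x123 - x2) + (α1 - α2) / (x123 - x3) = 0 := by
  have e1 := threeleg x1 x12 x123 x13 α2 α3 hQ1 h1 h12 h13
  have e2 := threeleg x2 x12 x123 x23 α1 α3 hQ2 h2 h12 h23
  have e3 := threeleg x3 x13 x123 x23 α1 α2 hQ3 h3 h13 h23
  rw [e1, show (α3 - α1) / (x123 - x2) = -((α1 - α3) / (x123 - x2)) by ring, e2, e3]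
  ring
end

section
/- Lagrangian relation on a single quad for H1: Let x, u, y, v, α, β be real numbers with α ≠ β, satisfying the H1 equation (x−y)(u−v) = α − β (in particular x ≠ y and u ≠ v). With the symmetric Lagrangians L(X,U) = (X+U)²/2 and Λ(X,Y;γ) = γ·log|X−Y|, one has exactly L(x,u) + L(y,v) − L(x,v) − L(y,u) − Λ(x,y;α−β) − Λ(u,v;α−β) = (α−β)(1 − log|α−β|). In particular, the left-hand side depends only on α−β and not on the particular solution (x,u,y,v). -/
/-- Lagrangian relation on a single quad for (H1). -/
theorem stmt_10 (x u y v α β : ℝ) (hαβ : α ≠ β)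
    (hQ : (x - y) * (u - v) = α - β) :
    (x + u)^2 / 2 + (y + v)^2 / 2 - (x + v)^2 / 2 - (y + u)^2 / 2
        - (α - β) * Real.log |x - y| - (α - β) * Real.log |u - v| =
      (α - β) * (1 - Real.log |α - β|) := by
  have hne : α - β ≠ 0 := sub_ne_zero.mpr hαβ
  have hx : x - y ≠ 0 := by
    intro h; rw [h, zero_mul] at hQ; exact hne hQ.symm
  have hu : u - v ≠ 0 := by
    intro h; rw [h, mul_zero] at hQ; exact hne hQ.symm
  have hlog : Real.log |x - y| + Real.log |u - v| = Real.log |α - β| := by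
    rw [← Real.log_mul (abs_ne_zero.mpr hx) (abs_ne_zero.mpr hu), ← abs_mul, hQ]
  have hsq : (x + u)^2 / 2 + (y + v)^2 / 2 - (x + v)^2 / 2 - (y + u)^2 / 2
      = α - β := by rw [← hQ]; ring
  nlinarith [hlog, hsq]
end

section
/- Lagrangian relation on a single quad for Q1 with δ=0: Let x, u, y, v, α, β be real numbers with α ≠ 0, β ≠ 0, α ≠ β, with x−u, y−v, x−v, y−u, x−y, u−v all nonzero, satisfying α(xu+yv) − β(xv+yu) − (α−β)(xy+uv) = 0. Then α(log|x−u| + log|y−v|) − β(log|x−v| + log|y−u|) − (α−β)(log|x−y| + log|u−v|) = α·log|α| − β·log|β| − (α−β)·log|α−β|. In particular, the left-hand side depends only on α and β and not on the particular solution (x,u,y,v). -/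
/-- Lagrangian relation on a single quad for (Q1)_{δ=0}. -/
theorem stmt_11 (x u y v α β : ℝ) (hα : α ≠ 0) (hβ : β ≠ 0) (hαβ : α ≠ β)
    (hxu : x - u ≠ 0) (hyv : y - v ≠ 0) (hxv : x - v ≠ 0) (hyu : y - u ≠ 0)
    (hxy : x - y ≠ 0) (huv : u - v ≠ 0)
    (hQ : α * (x*u + y*v) - β * (x*v + y*u) - (α - β) * (x*y + u*v) = 0) :
    α * (Real.log |x - u| + Real.log |y - v|)
        - β * (Real.log |x - v| + Real.log |y - u|)
        - (α - β) * (Real.log |x - y| + Real.log |u - v|) =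
      α * Real.log |α| - β * Real.log |β| - (α - β) * Real.log |α - β| := by
  have hαβ' : α - β ≠ 0 := sub_ne_zero.mpr hαβ
  have h1 : β * ((x - u) * (y - v)) = α * ((x - v) * (y - u)) := by
    linear_combination hQ
  have h2 : (α - β) * ((x - u) * (y - v)) = α * ((x - y) * (u - v)) := by
    linear_combination -hQ
  have e1 := congrArg (fun t => Real.log |t|) h1
  have e2 := congrArg (fun t => Real.log |t|) h2
  simp only [abs_mul] at e1 e2
  rw [Real.log_mul (abs_ne_zero.mpr hβ) (by positivity),
      Real.log_mul (abs_ne_zero.mpr hxu) (abs_ne_zero.mpr hyv),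
      Real.log_mul (abs_ne_zero.mpr hα) (by positivity),
      Real.log_mul (abs_ne_zero.mpr hxv) (abs_ne_zero.mpr hyu)] at e1
  rw [Real.log_mul (abs_ne_zero.mpr hαβ') (by positivity),
      Real.log_mul (abs_ne_zero.mpr hxu) (abs_ne_zero.mpr hyv),
      Real.log_mul (abs_ne_zero.mpr hα) (by positivity),
      Real.log_mul (abs_ne_zero.mpr hxy) (abs_ne_zero.mpr huv)] at e2
  linear_combination β * e1 + (α - β) * e2
end

section
/- Star-triangle (flip) relation for the Laplace-type system of Q1 with δ=0: Define Λ(X,Y;γ) = γ·log|X−Y| − (γ/2)·log|γ| for real X ≠ Y and real γ ≠ 0. Let x, x₁₂, x₂₃, x₁₃ be real numbers and α₁, α₂, α₃ pairwise distinct real parameters, such that (α₁−α₂)(x·x₁₂ + x₂₃·x₁₃) − (α₁−α₃)(x·x₁₃ + x₂₃·x₁₂) − (α₃−α₂)(x·x₂₃ + x₁₂·x₁₃) = 0 (the Q1_{δ=0} equation on the quad (x, x₁₂, x₂₃, x₁₃) with edge parameters α₁−α₂ and α₁−α₃), and such that the six differences x−x₁₂, x−x₂₃, x−x₁₃, x₂₃−x₁₃,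 x₁₃−x₁₂, x₁₂−x₂₃ are all nonzero. Then Λ(x,x₁₂;α₁−α₂) + Λ(x,x₂₃;α₂−α₃) + Λ(x,x₁₃;α₃−α₁) + Λ(x₂₃,x₁₃;α₁−α₂) + Λ(x₁₃,x₁₂;α₂−α₃) + Λ(x₁₂,x₂₃;α₃−α₁) = 0. -/
/-- The normalized symmetric antiderivative of the long leg of (Q1)_{δ=0}. -/
noncomputable def Lambda (X Y γ : ℝ) : ℝ :=
  γ * Real.log |X - Y| - (γ / 2) * Real.log |γ|

/-- Star-triangle (flip) relation for the Laplace-type system of (Q1)_{δ=0}. -/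
theorem stmt_12 (x x12 x23 x13 α1 α2 α3 : ℝ)
    (h12 : α1 ≠ α2) (h13 : α1 ≠ α3) (h23 : α2 ≠ α3)
    (hQ : (α1 - α2) * (x*x12 + x23*x13) - (α1 - α3) * (x*x13 + x23*x12)
        - (α3 - α2) * (x*x23 + x12*x13) = 0)
    (d1 : x - x12 ≠ 0) (d2 : x - x23 ≠ 0) (d3 : x - x13 ≠ 0)
    (d4 : x23 - x13 ≠ 0) (d5 : x13 - x12 ≠ 0) (d6 : x12 - x23 ≠ 0) :
    Lambda x x12 (α1 - α2) + Lambda x x23 (α2 - α3) + Lambda x x13 (α3 - α1)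
      + Lambda x23 x13 (α1 - α2) + Lambda x13 x12 (α2 - α3)
      + Lambda x12 x23 (α3 - α1) = 0 := by
  have ha : α1 - α2 ≠ 0 := sub_ne_zero.mpr h12
  have hb : α2 - α3 ≠ 0 := sub_ne_zero.mpr h23
  have hc : α3 - α1 ≠ 0 := sub_ne_zero.mpr (Ne.symm h13)
  have key1 : (α2 - α3) * ((x - x12) * (x23 - x13))
      = (α1 - α2) * ((x - x23) * (x13 - x12)) := by linear_combination hQ
  have key2 : (α3 - α1) * ((x - x12) * (x23 - x13))
      = (α1 - α2) * ((x - x13) * (x12 - x23)) := by linear_combination -hQ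
  have e1 : Real.log |α2 - α3| + (Real.log |x - x12| + Real.log |x23 - x13|)
      = Real.log |α1 - α2| + (Real.log |x - x23| + Real.log |x13 - x12|) := by
    have h := congrArg (fun z : ℝ => Real.log |z|) key1
    simp only [abs_mul] at h
    rwa [Real.log_mul (abs_ne_zero.mpr hb) (mul_ne_zero (abs_ne_zero.mpr d1) (abs_ne_zero.mpr d4)),
      Real.log_mul (abs_ne_zero.mpr d1) (abs_ne_zero.mpr d4),
      Real.log_mul (abs_ne_zero.mpr ha) (mul_ne_zero (abs_ne_zero.mpr d2) (abs_ne_zero.mpr d5)),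
      Real.log_mul (abs_ne_zero.mpr d2) (abs_ne_zero.mpr d5)] at h
  have e2 : Real.log |α3 - α1| + (Real.log |x - x12| + Real.log |x23 - x13|)
      = Real.log |α1 - α2| + (Real.log |x - x13| + Real.log |x12 - x23|) := by
    have h := congrArg (fun z : ℝ => Real.log |z|) key2
    simp only [abs_mul] at h
    rwa [Real.log_mul (abs_ne_zero.mpr hc) (mul_ne_zero (abs_ne_zero.mpr d1) (abs_ne_zero.mpr d4)),
      Real.log_mul (abs_ne_zero.mpr d1) (abs_ne_zero.mpr d4),
      Real.log_mul (abs_ne_zero.mpr ha) (mul_ne_zero (abs_ne_zero.mpr d3) (abs_ne_zero.mpr d6)),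
      Real.log_mul (abs_ne_zero.mpr d3) (abs_ne_zero.mpr d6)] at h
  simp only [Lambda]
  linear_combination (α3 - α2) * e1 + (α1 - α3) * e2
end

section
/- Closure relation (flip invariance of the action) for H1: Let x, x₁, x₂, x₃, x₁₂, x₁₃, x₂₃, x₁₂₃ be real numbers and α₁, α₂, α₃ real parameters satisfying the H1 equation on all six faces of an elementary cube: (x−x₁₂)(x₁−x₂) = α₁−α₂, (x−x₂₃)(x₂−x₃) = α₂−α₃, (x−x₁₃)(x₁−x₃) = α₁−α₃, (x₁−x₁₂₃)(x₁₂−x₁₃) = α₂−α₃, (x₂−x₁₂₃)(x₂₃−x₁₂) = α₃−α₁, (x₃−x₁₂₃)(x₁₃−x₂₃) = α₁−α₂. Assume the differences x₁−x₂, x₂−x₃, x₃−x₁, x₁₂−x₁₃, x₂₃−x₁₂, x₁₃−x₂₃ are all nonzero. Then x₁₂(x₁−x₂) + x₂₃(x₂−x₃) + x₁₃(x₃−x₁) + (α₂−α₃)·log(|x₂−x₃|/|x₁₂−x₁₃|) + (α₃−α₁)·log(|x₃−x₁|/|x₂₃−x₁₂|) + (α₁−α₂)·log(|x₁−x₂|/|x₁₃−x₂₃|)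 = 0. -/
/-- Closure relation (flip invariance of the action) for (H1). -/
theorem stmt_13 (x x1 x2 x3 x12 x13 x23 x123 α1 α2 α3 : ℝ)
    (f1 : (x - x12) * (x1 - x2) = α1 - α2)
    (f2 : (x - x23) * (x2 - x3) = α2 - α3)
    (f3 : (x - x13) * (x1 - x3) = α1 - α3)
    (f4 : (x1 - x123) * (x12 - x13) = α2 - α3)
    (f5 : (x2 - x123) * (x23 - x12) = α3 - α1)
    (f6 : (x3 - x123) * (x13 - x23) = α1 - α2)
    (d1 : x1 - x2 ≠ 0) (d2 : x2 - x3 ≠ 0) (d3 : x3 - x1 ≠ 0)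
    (d4 : x12 - x13 ≠ 0) (d5 : x23 - x12 ≠ 0) (d6 : x13 - x23 ≠ 0) :
    x12 * (x1 - x2) + x23 * (x2 - x3) + x13 * (x3 - x1)
      + (α2 - α3) * Real.log (|x2 - x3| / |x12 - x13|)
      + (α3 - α1) * Real.log (|x3 - x1| / |x23 - x12|)
      + (α1 - α2) * Real.log (|x1 - x2| / |x13 - x23|) = 0 := by
  -- tetrahedron property: D = (x2-x3)(x23-x12) - (x3-x1)(x12-x13) = 0
  have h1 : (x - x23 + (x12 - x13)) *
      ((x2 - x3) * (x23 - x12) - (x3 - x1) * (x12 - x13)) = 0 := by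
    linear_combination (x12 - x13) * f5 + (x12 - x13) * f3
      - (x23 - x12) * f4 + (x23 - x12) * f2
  have h2 : (x - x13 + (x23 - x12)) *
      ((x2 - x3) * (x23 - x12) - (x3 - x1) * (x12 - x13)) = 0 := by
    linear_combination (x23 - x12) * f6 - (x23 - x12) * f1
      - (x13 - x23) * f5 - (x13 - x23) * f3
  have hD : (x2 - x3) * (x23 - x12) = (x3 - x1) * (x12 - x13) := by
    by_contra hne
    have hDne : (x2 - x3) * (x23 - x12) - (x3 - x1) * (x12 - x13) ≠ 0 :=
      sub_ne_zero.mpr hne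
    have e1 : x - x23 + (x12 - x13) = 0 := by
      rcases mul_eq_zero.mp h1 with h | h
      · exact h
      · exact absurd h hDne
    have e2 : x - x13 + (x23 - x12) = 0 := by
      rcases mul_eq_zero.mp h2 with h | h
      · exact h
      · exact absurd h hDne
    exact d5 (by linarith)
  have hD3 : (x1 - x2) * (x12 - x13) = (x2 - x3) * (x13 - x23) := by
    linear_combination hD
  -- equality of the three log arguments
  have h12 : |x3 - x1| / |x23 - x12| = |x2 - x3| / |x12 - x13| := by
    rw [div_eq_div_iff (abs_ne_zero.mpr d5) (abs_ne_zero.mpr d4), ← abs_mul, ← abs_mul]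
    exact congrArg abs hD.symm
  have h13 : |x1 - x2| / |x13 - x23| = |x2 - x3| / |x12 - x13| := by
    rw [div_eq_div_iff (abs_ne_zero.mpr d6) (abs_ne_zero.mpr d4), ← abs_mul, ← abs_mul]
    exact congrArg abs hD3
  rw [h12, h13]
  linear_combination (-1 : ℝ) * f1 - f2 + f3
end

section
/- Closure relation (flip invariance of the action) for Q1 with δ=0: Let x, x₁, x₂, x₃, x₁₂, x₁₃, x₂₃, x₁₂₃ be real numbers and α₁, α₂, α₃ pairwise distinct nonzero real parameters such that Q(x,x₁,x₁₂,x₂;α₁,α₂) = 0, Q(x,x₂,x₂₃,x₃;α₂,α₃) = 0, Q(x,x₁,x₁₃,x₃;α₁,α₃) = 0, Q(x₁,x₁₂,x₁₂₃,x₁₃;α₂,α₃) = 0, Q(x₂,x₁₂,x₁₂₃,x₂₃;α₁,α₃) = 0, Q(x₃,x₁₃,x₁₂₃,x₂₃;α₁,α₂) = 0, where Q(x,u,y,v;α,β) = α(xu+yv) − β(xv+yu) − (α−β)(xy+uv). Assume all the differences x₁−x₁₂, x₂−x₂₃, x₃−x₁₃, x₁−x₁₃, x₂−x₁₂, x₃−x₂₃,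 x₁₂−x₁₃, x₂₃−x₁₂, x₁₃−x₂₃, x₁−x₂, x₂−x₃, x₃−x₁ are nonzero. Then α₂·log|x₁−x₁₂| + α₃·log|x₂−x₂₃| + α₁·log|x₃−x₁₃| − α₃·log|x₁−x₁₃| − α₁·log|x₂−x₁₂| − α₂·log|x₃−x₂₃| − (α₂−α₃)·log|x₁₂−x₁₃| − (α₃−α₁)·log|x₂₃−x₁₂| − (α₁−α₂)·log|x₁₃−x₂₃| + (α₂−α₃)·log|x₂−x₃| + (α₃−α₁)·log|x₃−x₁| + (α₁−α₂)·log|x₁−x₂| = 0. -/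
/-!
The equation (Q1)_{δ=0} factors as `α (x - v)(u - y) = β (x - u)(v - y)` and is affine in each
vertex, so the three faces at `x` determine `x₁₂, x₁₃, x₂₃` as explicit rational functions of
`x, x₁, x₂, x₃`. Substituting them yields a multiplicative identity
`(x₃ - x₁₃)(x₂₃ - x₁₂)(x₁ - x₂) = (x₂ - x₁₂)(x₁₃ - x₂₃)(x₃ - x₁)` together with its two cyclic
images; the flip difference is `α₁, α₂, α₃` times the logarithms of these three identities.
-/

/-- The quad-equation `Q(x, u, y, v; α, β)` of (Q1)_{δ=0}. -/
def q1 (x u y v α β : ℝ) : ℝ :=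
  α * (x*u + y*v) - β * (x*v + y*u) - (α - β) * (x*y + u*v)

lemma q1_eq_mul_sub_mul (x u y v α β : ℝ) :
    q1 x u y v α β = α * (x - v) * (u - y) - β * (x - u) * (v - y) := by
  unfold q1; ring

section Face

variable {x u y v α β : ℝ}

lemma q1_swap_eq_zero (h : q1 x u y v α β = 0) : q1 x v y u β α = 0 := by
  unfold q1 at *; linear_combination -h

lemma q1_denom_ne_zero (h : q1 x u y v α β = 0) (hα : α ≠ 0) (hβ : β ≠ 0) (huv : u ≠ v) :
    α * (x - v) - β * (x - u) ≠ 0 := by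
  intro hD
  rw [q1_eq_mul_sub_mul] at h
  have hxv : α * ((x - v) * (u - v)) = 0 := by linear_combination h - (v - y) * hD
  have hv : x - v = 0 := by simpa [hα, sub_ne_zero.mpr huv] using hxv
  have hxu : β * (x - u) = 0 := by linear_combination α * hv - hD
  have hu : x - u = 0 := by simpa [hβ] using hxu
  exact huv (by linear_combination hv - hu)

lemma eq_div_of_q1_eq_zero (h : q1 x u y v α β = 0) (hα : α ≠ 0) (hβ : β ≠ 0) (huv : u ≠ v) :
    y = (α * (x - v) * u - β * (x - u) * v) / (α * (x - v) - β * (x - u)) := by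
  rw [eq_div_iff (q1_denom_ne_zero h hα hβ huv)]
  unfold q1 at h
  linear_combination -h

end Face

lemma q1_cube_product_eq {x x1 x2 x3 x12 x13 x23 α1 α2 α3 : ℝ}
    (hα1 : α1 ≠ 0) (hα2 : α2 ≠ 0) (hα3 : α3 ≠ 0)
    (h12 : x1 ≠ x2) (h13 : x1 ≠ x3) (h23 : x2 ≠ x3)
    (hQ12 : q1 x x1 x12 x2 α1 α2 = 0) (hQ13 : q1 x x1 x13 x3 α1 α3 = 0)
    (hQ23 : q1 x x2 x23 x3 α2 α3 = 0) :
    (x3 - x13) * (x23 - x12) * (x1 - x2) = (x2 - x12) * (x13 - x23) * (x3 - x1) := by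
  have hD12 := q1_denom_ne_zero hQ12 hα1 hα2 h12
  have hD13 := q1_denom_ne_zero hQ13 hα1 hα3 h13
  have hD23 := q1_denom_ne_zero hQ23 hα2 hα3 h23
  rw [eq_div_of_q1_eq_zero hQ12 hα1 hα2 h12, eq_div_of_q1_eq_zero hQ13 hα1 hα3 h13,
    eq_div_of_q1_eq_zero hQ23 hα2 hα3 h23]
  -- as opaque atoms the denominators stay syntactically matched to their `≠ 0` facts in `field_simp`
  set D12 := α1 * (x - x2) - α2 * (x - x1)
  set D13 := α1 * (x - x3) - α3 * (x - x1)
  set D23 := α2 * (x - x3) - α3 * (x - x2)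
  field_simp
  ring

lemma log_abs_add_add_eq_of_mul_eq {a b c d e f : ℝ} (ha : a ≠ 0) (hb : b ≠ 0) (hc : c ≠ 0)
    (hd : d ≠ 0) (he : e ≠ 0) (hf : f ≠ 0) (h : a * b * c = d * e * f) :
    Real.log |a| + Real.log |b| + Real.log |c| = Real.log |d| + Real.log |e| + Real.log |f| := by
  have := congrArg Real.log h
  rwa [Real.log_mul (mul_ne_zero ha hb) hc, Real.log_mul ha hb,
    Real.log_mul (mul_ne_zero hd he) hf, Real.log_mul hd he,
    ← Real.log_abs a, ← Real.log_abs b, ← Real.log_abs c,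
    ← Real.log_abs d, ← Real.log_abs e, ← Real.log_abs f] at this

theorem stmt_14_general (x x1 x2 x3 x12 x13 x23 α1 α2 α3 : ℝ)
    (hα1 : α1 ≠ 0) (hα2 : α2 ≠ 0) (hα3 : α3 ≠ 0)
    (hQ1 : α1 * (x*x1 + x12*x2) - α2 * (x*x2 + x12*x1) - (α1 - α2) * (x*x12 + x1*x2) = 0)
    (hQ2 : α2 * (x*x2 + x23*x3) - α3 * (x*x3 + x23*x2) - (α2 - α3) * (x*x23 + x2*x3) = 0)
    (hQ3 : α1 * (x*x1 + x13*x3) - α3 * (x*x3 + x13*x1) - (α1 - α3) * (x*x13 + x1*x3) = 0)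
    (d1 : x1 - x12 ≠ 0) (d2 : x2 - x23 ≠ 0) (d3 : x3 - x13 ≠ 0)
    (d4 : x1 - x13 ≠ 0) (d5 : x2 - x12 ≠ 0) (d6 : x3 - x23 ≠ 0)
    (d7 : x12 - x13 ≠ 0) (d8 : x23 - x12 ≠ 0) (d9 : x13 - x23 ≠ 0)
    (d10 : x1 - x2 ≠ 0) (d11 : x2 - x3 ≠ 0) (d12 : x3 - x1 ≠ 0) :
    α2 * Real.log |x1 - x12| + α3 * Real.log |x2 - x23| + α1 * Real.log |x3 - x13|
      - α3 * Real.log |x1 - x13| - α1 * Real.log |x2 - x12| - α2 * Real.log |x3 - x23|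
      - (α2 - α3) * Real.log |x12 - x13| - (α3 - α1) * Real.log |x23 - x12|
      - (α1 - α2) * Real.log |x13 - x23|
      + (α2 - α3) * Real.log |x2 - x3| + (α3 - α1) * Real.log |x3 - x1|
      + (α1 - α2) * Real.log |x1 - x2| = 0 := by
  have h12 : x1 ≠ x2 := sub_ne_zero.mp d10
  have h23 : x2 ≠ x3 := sub_ne_zero.mp d11
  have h31 : x3 ≠ x1 := sub_ne_zero.mp d12
  have hQ1' : q1 x x2 x12 x1 α2 α1 = 0 := q1_swap_eq_zero hQ1
  have hQ2' : q1 x x3 x23 x2 α3 α2 = 0 := q1_swap_eq_zero hQ2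
  have hQ3' : q1 x x3 x13 x1 α3 α1 = 0 := q1_swap_eq_zero hQ3
  have l1 := log_abs_add_add_eq_of_mul_eq d3 d8 d10 d5 d9 d12 <|
    q1_cube_product_eq hα1 hα2 hα3 h12 h31.symm h23 hQ1 hQ3 hQ2
  have l2 := log_abs_add_add_eq_of_mul_eq d1 d9 d11 d6 d7 d10 <|
    q1_cube_product_eq hα2 hα3 hα1 h23 h12.symm h31 hQ2 hQ1' hQ3'
  have l3 := log_abs_add_add_eq_of_mul_eq d2 d7 d12 d4 d8 d11 <|
    q1_cube_product_eq hα3 hα1 hα2 h31 h23.symm h12 hQ3' hQ2' hQ1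
  linear_combination α1 * l1 + α2 * l2 + α3 * l3

/-- Closure relation (flip invariance of the action) for (Q1)_{δ=0}. -/
theorem stmt_14 (x x1 x2 x3 x12 x13 x23 x123 α1 α2 α3 : ℝ)
    (hα1 : α1 ≠ 0) (hα2 : α2 ≠ 0) (hα3 : α3 ≠ 0)
    (h12 : α1 ≠ α2) (h13 : α1 ≠ α3) (h23 : α2 ≠ α3)
    (hQ1 : α1 * (x*x1 + x12*x2) - α2 * (x*x2 + x12*x1) - (α1 - α2) * (x*x12 + x1*x2) = 0)
    (hQ2 : α2 * (x*x2 + x23*x3) - α3 * (x*x3 + x23*x2) - (α2 - α3) * (x*x23 + x2*x3) = 0)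
    (hQ3 : α1 * (x*x1 + x13*x3) - α3 * (x*x3 + x13*x1) - (α1 - α3) * (x*x13 + x1*x3) = 0)
    (hQ4 : α2 * (x1*x12 + x123*x13) - α3 * (x1*x13 + x123*x12)
        - (α2 - α3) * (x1*x123 + x12*x13) = 0)
    (hQ5 : α1 * (x2*x12 + x123*x23) - α3 * (x2*x23 + x123*x12)
        - (α1 - α3) * (x2*x123 + x12*x23) = 0)
    (hQ6 : α1 * (x3*x13 + x123*x23) - α2 * (x3*x23 + x123*x13)
        - (α1 - α2) * (x3*x123 + x13*x23) = 0)
    (d1 : x1 - x12 ≠ 0) (d2 : x2 - x23 ≠ 0) (d3 : x3 - x13 ≠ 0)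
    (d4 : x1 - x13 ≠ 0) (d5 : x2 - x12 ≠ 0) (d6 : x3 - x23 ≠ 0)
    (d7 : x12 - x13 ≠ 0) (d8 : x23 - x12 ≠ 0) (d9 : x13 - x23 ≠ 0)
    (d10 : x1 - x2 ≠ 0) (d11 : x2 - x3 ≠ 0) (d12 : x3 - x1 ≠ 0) :
    α2 * Real.log |x1 - x12| + α3 * Real.log |x2 - x23| + α1 * Real.log |x3 - x13|
      - α3 * Real.log |x1 - x13| - α1 * Real.log |x2 - x12| - α2 * Real.log |x3 - x23|
      - (α2 - α3) * Real.log |x12 - x13| - (α3 - α1) * Real.log |x23 - x12|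
      - (α1 - α2) * Real.log |x13 - x23|
      + (α2 - α3) * Real.log |x2 - x3| + (α3 - α1) * Real.log |x3 - x1|
      + (α1 - α2) * Real.log |x1 - x2| = 0 :=
  stmt_14_general x x1 x2 x3 x12 x13 x23 α1 α2 α3 hα1 hα2 hα3 hQ1 hQ2 hQ3 d1 d2 d3 d4 d5 d6 d7 d8 d9
    d10 d11 d12
end

section
/- Euler–Lagrange (discrete Laplace) equation for H1 on the square lattice: Let x be a field at an interior vertex of ℤ² with neighbors x₁ (east), x₂ (north), x₃ (west), x₄ (south), and let y_SE and y_NW be the fields at the vertices diagonally opposite to x in the quadrilaterals to the south-east and to the north-west of x. Suppose the H1 equations hold on these two quadrilaterals: (x − y_SE)(x₁ − x₄) = α₁ − α₂ and (x − y_NW)(x₃ − x₂) = α₁ − α₂, with x ≠ y_SE and x ≠ y_NW, all fields and parameters real, where α₁ is the parameter of horizontal edges and α₂ of vertical edges. Then x₁ + x₃ − x₂ − x₄ = (α₁−α₂)·(1/(x − y_SE) + 1/(x − y_NW)), i.e., the partial derivative with respect to x of the action S = Σ L(X,X₁;α₁) − Σ L(X,X₂;α₂) − Σ Λ(X₁,X₂;α₁−α₂)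 with L(X,U;α) = (X+U)²/2 and Λ(X,Y;γ) = γ·log|X−Y| vanishes. -/
/-- Euler-Lagrange (discrete Laplace) equation for (H1) on the square lattice. -/
theorem stmt_15 (x x1 x2 x3 x4 ySE yNW α1 α2 : ℝ)
    (hSE : (x - ySE) * (x1 - x4) = α1 - α2)
    (hNW : (x - yNW) * (x3 - x2) = α1 - α2)
    (h1 : x ≠ ySE) (h2 : x ≠ yNW) :
    x1 + x3 - x2 - x4 = (α1 - α2) * (1 / (x - ySE) + 1 / (x - yNW)) := by
  have hS : x - ySE ≠ 0 := sub_ne_zero.mpr h1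
  have hN : x - yNW ≠ 0 := sub_ne_zero.mpr h2
  field_simp
  ring_nf
  linear_combination (x - yNW) * hSE + (x - ySE) * hNW
end

section
/- Laplace-type equation on the black sublattice for Q1 with δ=0: Let x be a complex field at a vertex, with 'white' neighbors u₁ (east), u₂ (north), u₃ (west), u₄ (south) and 'black' diagonal neighbors y₁ (NE), y₂ (NW), y₃ (SW), y₄ (SE), and let α, β be the parameters of horizontal and vertical edges respectively, α ≠ β. Suppose the Q1_{δ=0} equation holds on the four quadrilaterals around x: Q(x,u₁,y₁,u₂;α,β) = 0, Q(x,u₂,y₂,u₃;β,α) = 0, Q(x,u₃,y₃,u₄;α,β) = 0, Q(x,u₄,y₄,u₁;β,α) = 0, where Q(x,u,y,v;α,β) = α(xu+yv) − β(xv+yu) − (α−β)(xy+uv), and suppose x is distinct from u₁,…,u₄ and from y₁,…,y₄. Then 1/(x−y₁) − 1/(x−y₂) + 1/(x−y₃) − 1/(x−y₄) = 0. -/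
set_option maxHeartbeats 1000000

lemma leg_aux (x u v y a b : ℂ) (hu : x ≠ u) (hv : x ≠ v) (hy : x ≠ y)
    (hQ : a * (x*u + y*v) - b * (x*v + y*u) - (a - b) * (x*y + u*v) = 0) :
    a / (x - u) - b / (x - v) = (a - b) / (x - y) := by
  have hu' : x - u ≠ 0 := sub_ne_zero.mpr hu
  have hv' : x - v ≠ 0 := sub_ne_zero.mpr hv
  have hy' : x - y ≠ 0 := sub_ne_zero.mpr hy
  field_simp
  linear_combination hQ

/-- Laplace-type equation on the black sublattice for (Q1)_{δ=0}. -/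
theorem stmt_16 (x u1 u2 u3 u4 y1 y2 y3 y4 α β : ℂ) (hαβ : α ≠ β)
    (hQ1 : α * (x*u1 + y1*u2) - β * (x*u2 + y1*u1) - (α - β) * (x*y1 + u1*u2) = 0)
    (hQ2 : β * (x*u2 + y2*u3) - α * (x*u3 + y2*u2) - (β - α) * (x*y2 + u2*u3) = 0)
    (hQ3 : α * (x*u3 + y3*u4) - β * (x*u4 + y3*u3) - (α - β) * (x*y3 + u3*u4) = 0)
    (hQ4 : β * (x*u4 + y4*u1) - α * (x*u1 + y4*u4) - (β - α) * (x*y4 + u4*u1) = 0)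
    (hu1 : x ≠ u1) (hu2 : x ≠ u2) (hu3 : x ≠ u3) (hu4 : x ≠ u4)
    (hy1 : x ≠ y1) (hy2 : x ≠ y2) (hy3 : x ≠ y3) (hy4 : x ≠ y4) :
    1 / (x - y1) - 1 / (x - y2) + 1 / (x - y3) - 1 / (x - y4) = 0 := by
  have h1 := leg_aux x u1 u2 y1 α β hu1 hu2 hy1 hQ1
  have h2 := leg_aux x u2 u3 y2 β α hu2 hu3 hy2 hQ2
  have h3 := leg_aux x u3 u4 y3 α β hu3 hu4 hy3 hQ3
  have h4 := leg_aux x u4 u1 y4 β α hu4 hu1 hy4 hQ4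
  have hd : α - β ≠ 0 := sub_ne_zero.mpr hαβ
  have key : (α - β) * (1 / (x - y1) - 1 / (x - y2) + 1 / (x - y3) - 1 / (x - y4)) = 0 := by
    have e1 : (α - β) * (1 / (x - y1)) = α / (x - u1) - β / (x - u2) := by
      rw [mul_one_div, ← h1]
    have e2 : (β - α) * (1 / (x - y2)) = β / (x - u2) - α / (x - u3) := by
      rw [mul_one_div, ← h2]
    have e3 : (α - β) * (1 / (x - y3)) = α / (x - u3) - β / (x - u4) := by
      rw [mul_one_div, ← h3]
    have e4 : (β - α) * (1 / (x - y4)) = β / (x - u4) - α / (x - u1) := by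
      rw [mul_one_div, ← h4]
    linear_combination e1 + e2 + e3 + e4
  exact (mul_eq_zero.mp key).resolve_left hd
end

section
/- Symmetric Lagrangian and its parameter derivative for Q1 with δ=1: Define L(X,U;α) = (X−U+α)·log|X−U+α| − (X−U−α)·log|X−U−α| for real X, U, α with X−U+α ≠ 0 and X−U−α ≠ 0. Then: (i) L is symmetric, L(X,U;α) = L(U,X;α); (ii) ∂L/∂X = log|(X−U+α)/(X−U−α)|, which is the leg function ψ(X,U;α) of (Q1)_{δ=1}; and (iii) for α ≠ 0, ∂L/∂α = log|h(X,U;α)| + log(2|α|) + 2, where h(X,U;α) = ((X−U)² − α²)/(2α) is the edge biquadratic of (Q1)_{δ=1}; in particular ∂L/∂α equals log|h| plus a function of α alone. -/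
/-!
Writing `F x = x log|x|`, we have `Lag X U α = F (X - U + α) - F (X - U - α)`. Since `F` is odd,
swapping `X` and `U` leaves `Lag` unchanged, and since `F' x = log|x| + 1`, both partial derivatives
are sums of logarithms. For the `α`-derivative, `(X - U + α) (X - U - α) = 2α · h(X, U; α)` turns
`log|X - U + α| + log|X - U - α|` into `log|h| + log(2|α|)`.
-/

/-- Symmetric Lagrangian for (Q1)_{δ=1}. -/
noncomputable def Lag (X U α : ℝ) : ℝ :=
  (X - U + α) * Real.log |X - U + α| - (X - U - α) * Real.log |X - U - α|

open Real

lemma hasDerivAt_mul_log_abs {y : ℝ} (hy : y ≠ 0) :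
    HasDerivAt (fun x : ℝ => x * log |x|) (log |y| + 1) y := by
  simpa only [log_abs] using hasDerivAt_mul_log hy

lemma log_abs_div_add_log_abs {a b : ℝ} (ha : a ≠ 0) (hb : b ≠ 0) :
    log |a / b| + log |b| = log |a| := by
  rw [← log_mul (by positivity) (by positivity), ← abs_mul, div_mul_cancel₀ a hb]

theorem Lag_symm (X U α : ℝ) : Lag X U α = Lag U X α := by
  have e1 : U - X + α = -(X - U - α) := by ring
  have e2 : U - X - α = -(X - U + α) := by ring
  rw [Lag, Lag, e1, e2, abs_neg, abs_neg]
  ring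

theorem hasDerivAt_Lag_fst {X U α : ℝ} (h1 : X - U + α ≠ 0) (h2 : X - U - α ≠ 0) :
    HasDerivAt (fun t => Lag t U α) (log |X - U + α| - log |X - U - α|) X := by
  have d1 := (hasDerivAt_mul_log_abs h1).comp X (((hasDerivAt_id X).sub_const U).add_const α)
  have d2 := (hasDerivAt_mul_log_abs h2).comp X (((hasDerivAt_id X).sub_const U).sub_const α)
  exact (d1.sub d2).congr_deriv (by ring)

theorem hasDerivAt_Lag_param {X U α : ℝ} (h1 : X - U + α ≠ 0) (h2 : X - U - α ≠ 0) :
    HasDerivAt (fun a => Lag X U a) (log |X - U + α| + log |X - U - α| + 2) α := by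
  have d1 := (hasDerivAt_mul_log_abs h1).comp α ((hasDerivAt_id α).const_add (X - U))
  have d2 := (hasDerivAt_mul_log_abs h2).comp α ((hasDerivAt_id α).const_sub (X - U))
  exact (d1.sub d2).congr_deriv (by ring)

lemma log_abs_add_log_abs_sub {X U α : ℝ} (h1 : X - U + α ≠ 0) (h2 : X - U - α ≠ 0)
    (hα : α ≠ 0) :
    log |X - U + α| + log |X - U - α| =
      log |((X - U) ^ 2 - α ^ 2) / (2 * α)| + log (2 * |α|) := by
  have hprod : (X - U) ^ 2 - α ^ 2 = (X - U + α) * (X - U - α) := by ring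
  rw [show 2 * |α| = |2 * α| by simp [abs_mul],
    log_abs_div_add_log_abs (hprod ▸ mul_ne_zero h1 h2) (by positivity), hprod, abs_mul,
    log_mul (by positivity) (by positivity)]

/-- Symmetric Lagrangian of (Q1)_{δ=1} and its parameter derivative. -/
theorem stmt_17 (X U α : ℝ) (h1 : X - U + α ≠ 0) (h2 : X - U - α ≠ 0) :
    Lag X U α = Lag U X α ∧
    HasDerivAt (fun t => Lag t U α) (Real.log |(X - U + α) / (X - U - α)|) X ∧
    (α ≠ 0 → HasDerivAt (fun a => Lag X U a)
      (Real.log |((X - U)^2 - α^2) / (2*α)| + Real.log (2 * |α|) + 2) α) := by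
  refine ⟨Lag_symm X U α, ?_, fun hα => ?_⟩
  · rw [abs_div, log_div (by positivity) (by positivity)]
    exact hasDerivAt_Lag_fst h1 h2
  · rw [← log_abs_add_log_abs_sub h1 h2 hα]
    exact hasDerivAt_Lag_param h1 h2
end

section
/- Lagrangian relation on a single quad for A1 with δ=0: Let x, u, y, v, α, β be real numbers with α ≠ 0, β ≠ 0, α ≠ β, with x+u, y+v, x+v, y+u, x−y, u−v all nonzero, satisfying the A1_{δ=0} equation α(xu+yv) − β(xv+yu) + (α−β)(xy+uv) = 0. Then α(log|x+u| + log|y+v|) − β(log|x+v| + log|y+u|) − (α−β)(log|x−y| + log|u−v|) = α·log|α| − β·log|β| − (α−β)·log|α−β|. In particular, the left-hand side depends only on α and β and not on the particular solution (x,u,y,v). -/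
/-- Lagrangian relation on a single quad for (A1)_{δ=0}. -/
theorem stmt_18 (x u y v α β : ℝ) (hα : α ≠ 0) (hβ : β ≠ 0) (hαβ : α ≠ β)
    (hxu : x + u ≠ 0) (hyv : y + v ≠ 0) (hxv : x + v ≠ 0) (hyu : y + u ≠ 0)
    (hxy : x - y ≠ 0) (huv : u - v ≠ 0)
    (hQ : α * (x*u + y*v) - β * (x*v + y*u) + (α - β) * (x*y + u*v) = 0) :
    α * (Real.log |x + u| + Real.log |y + v|)
        - β * (Real.log |x + v| + Real.log |y + u|)
        - (α - β) * (Real.log |x - y| + Real.log |u - v|) =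
      α * Real.log |α| - β * Real.log |β| - (α - β) * Real.log |α - β| := by
  have hab : α - β ≠ 0 := sub_ne_zero.mpr hαβ
  have h1 : (α - β) * ((x + u) * (y + v)) = -(α * ((x - y) * (u - v))) := by
    linear_combination hQ
  have h2 : (α - β) * ((x + v) * (y + u)) = -(β * ((x - y) * (u - v))) := by
    linear_combination hQ
  have e1 : Real.log |α - β| + (Real.log |x + u| + Real.log |y + v|) =
      Real.log |α| + (Real.log |x - y| + Real.log |u - v|) := by
    have := congrArg (fun t : ℝ => Real.log |t|) h1
    simp only [abs_mul, abs_neg] at this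
    rwa [Real.log_mul (abs_ne_zero.mpr hab) (by positivity),
      Real.log_mul (abs_ne_zero.mpr hxu) (abs_ne_zero.mpr hyv),
      Real.log_mul (abs_ne_zero.mpr hα) (by positivity),
      Real.log_mul (abs_ne_zero.mpr hxy) (abs_ne_zero.mpr huv)] at this
  have e2 : Real.log |α - β| + (Real.log |x + v| + Real.log |y + u|) =
      Real.log |β| + (Real.log |x - y| + Real.log |u - v|) := by
    have := congrArg (fun t : ℝ => Real.log |t|) h2
    simp only [abs_mul, abs_neg] at this
    rwa [Real.log_mul (abs_ne_zero.mpr hab) (by positivity),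
      Real.log_mul (abs_ne_zero.mpr hxv) (abs_ne_zero.mpr hyu),
      Real.log_mul (abs_ne_zero.mpr hβ) (by positivity),
      Real.log_mul (abs_ne_zero.mpr hxy) (abs_ne_zero.mpr huv)] at this
  linear_combination α * e1 - β * e2
end

section
/- Euler–Lagrange (discrete Laplace) equation for Q1 with δ=0 on the square lattice: Let x be a complex field at an interior vertex with neighbors x₁ (east), x₂ (north), x₃ (west), x₄ (south), and let y_SE and y_NW be the fields diagonally opposite to x in the quadrilaterals to the south-east and north-west of x. Suppose Q(x,x₁,y_SE,x₄;α,β) = 0 and Q(x,x₃,y_NW,x₂;α,β) = 0, where Q(x,u,y,v;α,β) = α(xu+yv) − β(xv+yu) − (α−β)(xy+uv), α is the parameter of horizontal edges and β of vertical edges, and x is distinct from x₁, x₂, x₃, x₄, y_SE, y_NW. Then α/(x−x₁) + α/(x−x₃) − β/(x−x₂) − β/(x−x₄) − (α−β)/(x−y_SE) − (α−β)/(x−y_NW) = 0; this is the vanishing of the variation at x of the action S = Σ L(X,X₁;α) − Σ L(X,X₂;β) − Σ Λ(X₁,X₂;α−β) with L(X,U;γ) = Λ(X,U;γ) = γ·log|X−U|.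 -/
lemma threeLeg (x u y v α β : ℂ)
    (hQ : α * (x*u + y*v) - β * (x*v + y*u) - (α - β) * (x*y + u*v) = 0)
    (hu : x ≠ u) (hv : x ≠ v) (hy : x ≠ y) :
    α / (x - u) - β / (x - v) - (α - β) / (x - y) = 0 := by
  have hu' : x - u ≠ 0 := sub_ne_zero.mpr hu
  have hv' : x - v ≠ 0 := sub_ne_zero.mpr hv
  have hy' : x - y ≠ 0 := sub_ne_zero.mpr hy
  field_simp
  linear_combination hQ

/-- Euler-Lagrange (discrete Laplace) equation for (Q1)_{δ=0} on the square
lattice. -/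
theorem stmt_19 (x x1 x2 x3 x4 ySE yNW α β : ℂ)
    (hSE : α * (x*x1 + ySE*x4) - β * (x*x4 + ySE*x1) - (α - β) * (x*ySE + x1*x4) = 0)
    (hNW : α * (x*x3 + yNW*x2) - β * (x*x2 + yNW*x3) - (α - β) * (x*yNW + x3*x2) = 0)
    (h1 : x ≠ x1) (h2 : x ≠ x2) (h3 : x ≠ x3) (h4 : x ≠ x4)
    (hSE' : x ≠ ySE) (hNW' : x ≠ yNW) :
    α / (x - x1) + α / (x - x3) - β / (x - x2) - β / (x - x4)
      - (α - β) / (x - ySE) - (α - β) / (x - yNW) = 0 := by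
  have e1 := threeLeg x x1 ySE x4 α β (by linear_combination hSE) h1 h4 hSE'
  have e2 := threeLeg x x3 yNW x2 α β (by linear_combination hNW) h3 h2 hNW'
  linear_combination e1 + e2
end
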